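/- Let L* be a countable, locally finite lattice that is universal for finite lattices and ultrahomogeneous for finite lattices. Then any two nontrivial closed intervals of L* are isomorphic as lattices: for all a, b, c, d ∈ L* with a < b and c < d, there is a bijection φ from the interval [a, b] = {x : a ≤ x ≤ b} onto the interval [c, d] = {x : c ≤ x ≤ d} satisfying φ (x ⊔ y) = φ x ⊔ φ y and φ (x ⊓ y) = φ x ⊓ φ y for all x, y ∈ [a, b]. -/
import Mathlib

/-- A lattice is locally finite if every finite subset is contained in a finite
sublattice (a finite subset closed under `⊔` and `⊓`). -/
def LatLocallyFinite (L : Type) [Lattice L] : Prop :=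
  ∀ S : Finset L, ∃ T : Finset L, S ⊆ T ∧ ∀ a ∈ T, ∀ b ∈ T, a ⊔ b ∈ T ∧ a ⊓ b ∈ T

/-- A lattice embedding: an injective map preserving `⊔` and `⊓`. -/
def IsLatEmb {A L : Type} [Lattice A] [Lattice L] (e : A → L) : Prop :=
  Function.Injective e ∧ ∀ a b : A, e (a ⊔ b) = e a ⊔ e b ∧ e (a ⊓ b) = e a ⊓ e b

/-- A lattice `L` is universal for finite lattices if every finite lattice admits
a lattice embedding into `L`. -/
def UnivFin (L : Type) [Lattice L] : Prop :=
  ∀ (A : Type) [Fintype A] [Lattice A], ∃ e : A → L, IsLatEmb e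

/-- A lattice `L` is ultrahomogeneous for finite lattices if for all finite lattices
`A`, `B`, every lattice embedding `j : A → B` and every lattice embedding `e : A → L`,
there is a lattice embedding `e' : B → L` with `e' ∘ j = e`. -/
def UltraFin (L : Type) [Lattice L] : Prop :=
  ∀ (A B : Type) [Fintype A] [Lattice A] [Fintype B] [Lattice B]
    (j : A → B) (e : A → L), IsLatEmb j → IsLatEmb e →
    ∃ e' : B → L, IsLatEmb e' ∧ e' ∘ j = e

open Classical

section FraisseAux

variable {L : Type} [Lattice L]

lemma IsLatEmb.mono {A M : Type} [Lattice A] [Lattice M] {e : A → M}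
    (he : IsLatEmb e) {x y : A} (h : x ≤ y) : e x ≤ e y := by
  have h1 := (he.2 x y).1
  rw [sup_eq_right.mpr h] at h1
  rw [h1]; exact le_sup_left

/-- A finite partial isomorphism between intervals `[a,b]` and `[c,d]`. -/
structure PIso (a b c d : L) : Type where
  F : Finset L
  f : L → L
  hIcc : ∀ x ∈ F, a ≤ x ∧ x ≤ b
  hcl : ∀ x ∈ F, ∀ y ∈ F, x ⊔ y ∈ F ∧ x ⊓ y ∈ F
  ha : a ∈ F
  hb : b ∈ F
  hfa : f a = c
  hfb : f b = d
  hfIcc : ∀ x ∈ F, c ≤ f x ∧ f x ≤ d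
  hinj : ∀ x ∈ F, ∀ y ∈ F, f x = f y → x = y
  hsup : ∀ x ∈ F, ∀ y ∈ F, f (x ⊔ y) = f x ⊔ f y
  hinf : ∀ x ∈ F, ∀ y ∈ F, f (x ⊓ y) = f x ⊓ f y

/-- `q` extends `p`. -/
def PIso.Ext {a b c d : L} (p q : PIso a b c d) : Prop :=
  p.F ⊆ q.F ∧ ∀ x ∈ p.F, q.f x = p.f x

lemma PIso.Ext.refl {a b c d : L} (p : PIso a b c d) : p.Ext p :=
  ⟨subset_rfl, fun _ _ => rfl⟩

lemma PIso.Ext.trans {a b c d : L} {p q r : PIso a b c d}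
    (h1 : p.Ext q) (h2 : q.Ext r) : p.Ext r :=
  ⟨h1.1.trans h2.1, fun x hx => (h2.2 x (h1.1 hx)).trans (h1.2 x hx)⟩

/-- The sublattice determined by a finset closed under `⊔` and `⊓`. -/
def finSub (F : Finset L) (hcl : ∀ x ∈ F, ∀ y ∈ F, x ⊔ y ∈ F ∧ x ⊓ y ∈ F) :
    Sublattice L where
  carrier := ↑F
  supClosed' := fun x hx y hy => (hcl x hx y hy).1
  infClosed' := fun x hx y hy => (hcl x hx y hy).2

lemma forward_ext (hlf : LatLocallyFinite L) (hh : UltraFin L)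
    {a b c d : L} (p : PIso a b c d) (x : L) (hx1 : a ≤ x) (hx2 : x ≤ b) :
    ∃ q : PIso a b c d, p.Ext q ∧ x ∈ q.F := by
  obtain ⟨T, hsubT, hTcl⟩ := hlf (insert x p.F)
  set F' : Finset L := T.filter (fun z => a ≤ z ∧ z ≤ b) with hF'def
  have hmemF' : ∀ z, z ∈ F' ↔ z ∈ T ∧ (a ≤ z ∧ z ≤ b) := by
    intro z; simp [hF'def]
  have hPF' : p.F ⊆ F' := fun z hz =>
    (hmemF' z).2 ⟨hsubT (Finset.mem_insert_of_mem hz), p.hIcc z hz⟩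
  have hxF' : x ∈ F' := (hmemF' x).2 ⟨hsubT (Finset.mem_insert_self _ _), hx1, hx2⟩
  have hF'cl : ∀ u ∈ F', ∀ v ∈ F', u ⊔ v ∈ F' ∧ u ⊓ v ∈ F' := by
    intro u hu v hv
    obtain ⟨huT, hua, hub⟩ := (hmemF' u).1 hu
    obtain ⟨hvT, hva, hvb⟩ := (hmemF' v).1 hv
    exact ⟨(hmemF' _).2 ⟨(hTcl u huT v hvT).1, le_trans hua le_sup_left, sup_le hub hvb⟩,
      (hmemF' _).2 ⟨(hTcl u huT v hvT).2, le_inf hua hva, le_trans inf_le_left hub⟩⟩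
  set S : Sublattice L := finSub p.F p.hcl with hSdef
  set S' : Sublattice L := finSub F' hF'cl with hS'def
  haveI : Fintype ↥S := Fintype.ofFinset p.F (fun _ => Iff.rfl)
  haveI : Fintype ↥S' := Fintype.ofFinset F' (fun _ => Iff.rfl)
  have hmemS : ∀ z : ↥S, z.1 ∈ p.F := fun z => z.2
  have hj : IsLatEmb (fun z : ↥S => (⟨z.1, hPF' (hmemS z)⟩ : ↥S')) := by
    refine ⟨fun u v h => ?_, fun u v => ⟨Subtype.ext rfl, Subtype.ext rfl⟩⟩
    have h2 := congrArg Subtype.val h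
    exact Subtype.ext h2
  have he : IsLatEmb (fun z : ↥S => p.f z.1) := by
    refine ⟨fun u v h => Subtype.ext (p.hinj _ (hmemS u) _ (hmemS v) h),
      fun u v => ⟨p.hsup _ (hmemS u) _ (hmemS v), p.hinf _ (hmemS u) _ (hmemS v)⟩⟩
  obtain ⟨e', he', hcomp⟩ := hh ↥S ↥S' _ _ hj he
  have hext : ∀ z (hz : z ∈ p.F), e' ⟨z, hPF' hz⟩ = p.f z := fun z hz =>
    congrFun hcomp ⟨z, hz⟩
  set g : L → L := fun z => if h : z ∈ F' then e' ⟨z, h⟩ else z with hgdef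
  have hg : ∀ z (hz : z ∈ F'), g z = e' ⟨z, hz⟩ := fun z hz => dif_pos hz
  have hgp : ∀ z ∈ p.F, g z = p.f z := fun z hz => (hg z (hPF' hz)).trans (hext z hz)
  have hmono : ∀ (u v : ↥S') , (u:L) ≤ v → e' u ≤ e' v := fun u v h => he'.mono h
  have hga : g a = c := (hgp a p.ha).trans p.hfa
  have hgb : g b = d := (hgp b p.hb).trans p.hfb
  have haF' : a ∈ F' := hPF' p.ha
  have hbF' : b ∈ F' := hPF' p.hb
  refine ⟨⟨F', g, fun z hz => ((hmemF' z).1 hz).2, hF'cl, haF', hbF', hga, hgb, ?_, ?_, ?_, ?_⟩,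
    ⟨hPF', hgp⟩, hxF'⟩
  · intro z hz
    obtain ⟨_, hza, hzb⟩ := (hmemF' z).1 hz
    constructor
    · rw [← hga, hg a haF', hg z hz]
      exact hmono ⟨a, haF'⟩ ⟨z, hz⟩ hza
    · rw [← hgb, hg b hbF', hg z hz]
      exact hmono ⟨z, hz⟩ ⟨b, hbF'⟩ hzb
  · intro u hu v hv h
    rw [hg u hu, hg v hv] at h
    exact congrArg Subtype.val (he'.1 h)
  · intro u hu v hv
    rw [hg u hu, hg v hv, hg _ (hF'cl u hu v hv).1]
    exact (he'.2 ⟨u, hu⟩ ⟨v, hv⟩).1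
  · intro u hu v hv
    rw [hg u hu, hg v hv, hg _ (hF'cl u hu v hv).2]
    exact (he'.2 ⟨u, hu⟩ ⟨v, hv⟩).2

lemma backward_ext (hlf : LatLocallyFinite L) (hh : UltraFin L)
    {a b c d : L} (p : PIso a b c d) (y : L) (hy1 : c ≤ y) (hy2 : y ≤ d) :
    ∃ q : PIso a b c d, p.Ext q ∧ ∃ z ∈ q.F, q.f z = y := by
  obtain ⟨T, hsubT, hTcl⟩ := hlf (insert y (p.F.image p.f))
  set G : Finset L := T.filter (fun z => c ≤ z ∧ z ≤ d) with hGdef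
  have hmemG : ∀ z, z ∈ G ↔ z ∈ T ∧ (c ≤ z ∧ z ≤ d) := by
    intro z; simp [hGdef]
  have hPG : ∀ z ∈ p.F, p.f z ∈ G := fun z hz =>
    (hmemG _).2 ⟨hsubT (Finset.mem_insert_of_mem (Finset.mem_image_of_mem _ hz)),
      p.hfIcc z hz⟩
  have hyG : y ∈ G := (hmemG y).2 ⟨hsubT (Finset.mem_insert_self _ _), hy1, hy2⟩
  have hGcl : ∀ u ∈ G, ∀ v ∈ G, u ⊔ v ∈ G ∧ u ⊓ v ∈ G := by
    intro u hu v hv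
    obtain ⟨huT, hua, hub⟩ := (hmemG u).1 hu
    obtain ⟨hvT, hva, hvb⟩ := (hmemG v).1 hv
    exact ⟨(hmemG _).2 ⟨(hTcl u huT v hvT).1, le_trans hua le_sup_left, sup_le hub hvb⟩,
      (hmemG _).2 ⟨(hTcl u huT v hvT).2, le_inf hua hva, le_trans inf_le_left hub⟩⟩
  set S : Sublattice L := finSub p.F p.hcl with hSdef
  set SG : Sublattice L := finSub G hGcl with hSGdef
  haveI : Fintype ↥S := Fintype.ofFinset p.F (fun _ => Iff.rfl)
  haveI : Fintype ↥SG := Fintype.ofFinset G (fun _ => Iff.rfl)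
  have hmemS : ∀ z : ↥S, z.1 ∈ p.F := fun z => z.2
  have hj : IsLatEmb (fun z : ↥S => (⟨p.f z.1, hPG _ (hmemS z)⟩ : ↥SG)) := by
    constructor
    · intro u v h
      exact Subtype.ext (p.hinj _ (hmemS u) _ (hmemS v) (congrArg Subtype.val h))
    · intro u v
      exact ⟨Subtype.ext (p.hsup _ (hmemS u) _ (hmemS v)),
        Subtype.ext (p.hinf _ (hmemS u) _ (hmemS v))⟩
  have he : IsLatEmb (fun z : ↥S => (z.1 : L)) :=
    ⟨fun u v h => Subtype.ext h, fun u v => ⟨rfl, rfl⟩⟩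
  obtain ⟨e', he', hcomp⟩ := hh ↥S ↥SG _ _ hj he
  have hext : ∀ z (hz : z ∈ p.F), e' ⟨p.f z, hPG z hz⟩ = z := fun z hz =>
    congrFun hcomp ⟨z, hz⟩
  set F' : Finset L := G.attach.image (fun z => e' ⟨z.1, z.2⟩) with hF'def
  have hmemF' : ∀ w, w ∈ F' ↔ ∃ z : ↥SG, e' z = w := by
    intro w
    simp only [hF'def, Finset.mem_image, Finset.mem_attach, true_and]
    constructor
    · rintro ⟨z, hz⟩; exact ⟨⟨z.1, z.2⟩, hz⟩
    · rintro ⟨z, hz⟩; exact ⟨⟨z.1, z.2⟩, hz⟩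
  set g : L → L := fun w => if h : ∃ z : ↥SG, e' z = w then (Classical.choose h).1 else w
    with hgdef
  have hg : ∀ z : ↥SG, g (e' z) = z.1 := by
    intro z
    have h : ∃ z' : ↥SG, e' z' = e' z := ⟨z, rfl⟩
    have := Classical.choose_spec h
    have hz : Classical.choose h = z := he'.1 this
    simp only [hgdef, dif_pos h, hz]
  have hF'mem : ∀ z : ↥SG, e' z ∈ F' := fun z => (hmemF' _).2 ⟨z, rfl⟩
  -- membership of c, d in G
  have hcG : c ∈ G := by rw [← p.hfa]; exact hPG a p.ha
  have hdG : d ∈ G := by rw [← p.hfb]; exact hPG b p.hb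
  have heca : e' ⟨c, hcG⟩ = a := by
    have : (⟨c, hcG⟩ : ↥SG) = ⟨p.f a, hPG a p.ha⟩ := Subtype.ext p.hfa.symm
    rw [this]; exact hext a p.ha
  have hedb : e' ⟨d, hdG⟩ = b := by
    have : (⟨d, hdG⟩ : ↥SG) = ⟨p.f b, hPG b p.hb⟩ := Subtype.ext p.hfb.symm
    rw [this]; exact hext b p.hb
  have hmono : ∀ (u v : ↥SG), (u:L) ≤ v → e' u ≤ e' v := fun u v h => he'.mono h
  have hIcc' : ∀ w ∈ F', a ≤ w ∧ w ≤ b := by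
    intro w hw
    obtain ⟨z, hz⟩ := (hmemF' w).1 hw
    obtain ⟨_, hzc, hzd⟩ := (hmemG z.1).1 z.2
    subst hz
    exact ⟨heca ▸ hmono ⟨c, hcG⟩ z hzc, hedb ▸ hmono z ⟨d, hdG⟩ hzd⟩
  have hcl' : ∀ u ∈ F', ∀ v ∈ F', u ⊔ v ∈ F' ∧ u ⊓ v ∈ F' := by
    intro u hu v hv
    obtain ⟨zu, hzu⟩ := (hmemF' u).1 hu
    obtain ⟨zv, hzv⟩ := (hmemF' v).1 hv
    subst hzu; subst hzv
    constructor
    · rw [← (he'.2 zu zv).1]; exact hF'mem _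
    · rw [← (he'.2 zu zv).2]; exact hF'mem _
  have haF' : a ∈ F' := heca ▸ hF'mem ⟨c, hcG⟩
  have hbF' : b ∈ F' := hedb ▸ hF'mem ⟨d, hdG⟩
  have hga : g a = c := by rw [← heca, hg]
  have hgb : g b = d := by rw [← hedb, hg]
  have hpsub : p.F ⊆ F' := by
    intro z hz
    have : e' ⟨p.f z, hPG z hz⟩ = z := hext z hz
    rw [← this]; exact hF'mem _
  have hgp : ∀ z ∈ p.F, g z = p.f z := by
    intro z hz
    conv_lhs => rw [← hext z hz]
    rw [hg]
  refine ⟨⟨F', g, hIcc', hcl', haF', hbF', hga, hgb, ?_, ?_, ?_, ?_⟩, ⟨hpsub, hgp⟩,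
    e' ⟨y, hyG⟩, hF'mem _, hg _⟩
  · intro w hw
    obtain ⟨z, hz⟩ := (hmemF' w).1 hw
    subst hz
    rw [hg]
    exact ((hmemG z.1).1 z.2).2
  · intro u hu v hv h
    obtain ⟨zu, hzu⟩ := (hmemF' u).1 hu
    obtain ⟨zv, hzv⟩ := (hmemF' v).1 hv
    subst hzu; subst hzv
    rw [hg, hg] at h
    rw [Subtype.ext h]
  · intro u hu v hv
    obtain ⟨zu, hzu⟩ := (hmemF' u).1 hu
    obtain ⟨zv, hzv⟩ := (hmemF' v).1 hv
    subst hzu; subst hzv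
    rw [hg, hg, ← (he'.2 zu zv).1, hg]
    rfl
  · intro u hu v hv
    obtain ⟨zu, hzu⟩ := (hmemF' u).1 hu
    obtain ⟨zv, hzv⟩ := (hmemF' v).1 hv
    subst hzu; subst hzv
    rw [hg, hg, ← (he'.2 zu zv).2, hg]
    rfl

lemma base_piso {a b c d : L} (hab : a < b) (hcd : c < d) : Nonempty (PIso a b c d) := by
  classical
  set f : L → L := fun z => if z = b then d else c with hfdef
  have hfb' : f b = d := if_pos rfl
  have hfa' : ∀ z, z ≠ b → f z = c := fun z hz => if_neg hz
  have hmem : ∀ z ∈ ({a, b} : Finset L), z = a ∨ z = b := by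
    intro z hz; simpa using hz
  have hamem : a ∈ ({a, b} : Finset L) := Finset.mem_insert_self _ _
  have hbmem : b ∈ ({a, b} : Finset L) := Finset.mem_insert_of_mem (Finset.mem_singleton_self _)
  refine ⟨⟨{a, b}, f, ?_, ?_, hamem, hbmem, hfa' a hab.ne, hfb', ?_, ?_, ?_, ?_⟩⟩
  · intro z hz
    rcases hmem z hz with rfl | rfl
    · exact ⟨le_refl _, hab.le⟩
    · exact ⟨hab.le, le_refl _⟩
  · intro u hu v hv
    rcases hmem u hu with rfl | rfl <;> rcases hmem v hv with rfl | rfl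
    · constructor <;> [rw [sup_idem]; rw [inf_idem]] <;> exact hamem
    · exact ⟨by rw [sup_eq_right.mpr hab.le]; exact hbmem,
        by rw [inf_eq_left.mpr hab.le]; exact hamem⟩
    · exact ⟨by rw [sup_eq_left.mpr hab.le]; exact hbmem,
        by rw [inf_eq_right.mpr hab.le]; exact hamem⟩
    · constructor <;> [rw [sup_idem]; rw [inf_idem]] <;> exact hbmem
  · intro z hz
    rcases hmem z hz with rfl | rfl
    · rw [hfa' _ hab.ne]; exact ⟨le_refl _, hcd.le⟩
    · rw [hfb']; exact ⟨hcd.le, le_refl _⟩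
  · intro u hu v hv h
    rcases hmem u hu with rfl | rfl <;> rcases hmem v hv with rfl | rfl
    · rfl
    · rw [hfa' _ hab.ne, hfb'] at h; exact absurd h hcd.ne
    · rw [hfa' _ hab.ne, hfb'] at h; exact absurd h.symm hcd.ne
    · rfl
  · intro u hu v hv
    rcases hmem u hu with rfl | rfl <;> rcases hmem v hv with rfl | rfl
    · rw [sup_idem, sup_idem]
    · rw [sup_eq_right.mpr hab.le, hfa' _ hab.ne, hfb', sup_eq_right.mpr hcd.le]
    · rw [sup_eq_left.mpr hab.le, hfa' _ hab.ne, hfb', sup_eq_left.mpr hcd.le]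
    · rw [sup_idem, sup_idem]
  · intro u hu v hv
    rcases hmem u hu with rfl | rfl <;> rcases hmem v hv with rfl | rfl
    · rw [inf_idem, inf_idem]
    · rw [inf_eq_left.mpr hab.le, hfa' _ hab.ne, hfb', inf_eq_left.mpr hcd.le]
    · rw [inf_eq_right.mpr hab.le, hfa' _ hab.ne, hfb', inf_eq_right.mpr hcd.le]
    · rw [inf_idem, inf_idem]

end FraisseAux

/-- Any two nontrivial closed intervals of the typical countable lattice are
isomorphic as lattices (with the induced join and meet). -/
theorem fraisse_lattice_intervals_isomorphic (L : Type) [Lattice L]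
    (hc : Countable L) (hlf : LatLocallyFinite L) (hu : UnivFin L) (hh : UltraFin L)
    (a b c d : L) (hab : a < b) (hcd : c < d) :
    ∃ φ : Set.Icc a b → Set.Icc c d,
      Function.Bijective φ ∧
      (∀ x y : Set.Icc a b, φ (x ⊔ y) = φ x ⊔ φ y) ∧
      (∀ x y : Set.Icc a b, φ (x ⊓ y) = φ x ⊓ φ y) := by
  haveI := hc
  haveI : Nonempty (Set.Icc a b) := ⟨⟨a, le_refl _, hab.le⟩⟩
  haveI : Nonempty (Set.Icc c d) := ⟨⟨c, le_refl _, hcd.le⟩⟩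
  obtain ⟨xs, hxs⟩ := exists_surjective_nat (Set.Icc a b)
  obtain ⟨ys, hys⟩ := exists_surjective_nat (Set.Icc c d)
  obtain ⟨p0⟩ := base_piso (L := L) hab hcd
  -- step: extend any PIso to cover xs n and hit ys n
  have key : ∀ (p : PIso a b c d) (n : ℕ), ∃ q : PIso a b c d,
      p.Ext q ∧ (xs n : L) ∈ q.F ∧ ∃ z ∈ q.F, q.f z = (ys n : L) := by
    intro p n
    obtain ⟨q1, h1, hx1⟩ := forward_ext hlf hh p (xs n) (xs n).2.1 (xs n).2.2
    obtain ⟨q2, h2, hz⟩ := backward_ext hlf hh q1 (ys n) (ys n).2.1 (ys n).2.2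
    exact ⟨q2, h1.trans h2, h2.1 hx1, hz⟩
  choose stp hstp1 hstp2 hstp3 using key
  let seq : ℕ → PIso a b c d := fun n => Nat.rec p0 (fun n p => stp p n) n
  have hseq_succ : ∀ n, seq (n + 1) = stp (seq n) n := fun n => rfl
  have hmono : ∀ m n, m ≤ n → (seq m).Ext (seq n) := by
    intro m n h
    induction n with
    | zero => rw [Nat.le_zero.1 h]; exact PIso.Ext.refl _
    | succ k ih =>
      rcases Nat.lt_or_ge m (k + 1) with h' | h'
      · exact (ih (Nat.lt_succ_iff.1 h')).trans (hstp1 (seq k) k)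
      · rw [Nat.le_antisymm h h']; exact PIso.Ext.refl _
  have hex : ∀ x : Set.Icc a b, ∃ n, (x : L) ∈ (seq n).F := by
    intro x
    obtain ⟨k, hk⟩ := hxs x
    exact ⟨k + 1, hk ▸ hstp2 (seq k) k⟩
  set N : Set.Icc a b → ℕ := fun x => Classical.choose (hex x) with hNdef
  have hN : ∀ x, (x : L) ∈ (seq (N x)).F := fun x => Classical.choose_spec (hex x)
  -- coherence of values along the chain
  have hcoh : ∀ m n (x : L), x ∈ (seq m).F → x ∈ (seq n).F →
      (seq m).f x = (seq n).f x := by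
    intro m n x hm hn
    rcases le_total m n with h | h
    · exact ((hmono m n h).2 x hm).symm
    · exact (hmono n m h).2 x hn
  refine ⟨fun x => ⟨(seq (N x)).f x, ((seq (N x)).hfIcc x (hN x)).1,
    ((seq (N x)).hfIcc x (hN x)).2⟩, ⟨?_, ?_⟩, ?_, ?_⟩
  · -- injective
    intro x y h
    have hval : (seq (N x)).f x = (seq (N y)).f y := congrArg Subtype.val h
    set n := max (N x) (N y) with hn
    have hxm : (x : L) ∈ (seq n).F := (hmono _ n (le_max_left _ _)).1 (hN x)
    have hym : (y : L) ∈ (seq n).F := (hmono _ n (le_max_right _ _)).1 (hN y)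
    have : (seq n).f x = (seq n).f y := by
      rw [← hcoh (N x) n x (hN x) hxm, ← hcoh (N y) n y (hN y) hym]
      exact hval
    exact Subtype.ext ((seq n).hinj _ hxm _ hym this)
  · -- surjective
    intro y
    obtain ⟨k, hk⟩ := hys y
    obtain ⟨z, hz, hfz⟩ := hstp3 (seq k) k
    have hzF : z ∈ (seq (k + 1)).F := hz
    refine ⟨⟨z, (seq (k + 1)).hIcc z hzF⟩, ?_⟩
    apply Subtype.ext
    show (seq (N _)).f z = (y : L)
    rw [hcoh (N ⟨z, (seq (k + 1)).hIcc z hzF⟩) (k + 1) z (hN _) hzF, hfz, hk]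
  · -- sup
    intro x y
    apply Subtype.ext
    set n := max (max (N x) (N y)) (N (x ⊔ y)) with hn
    have hxm : (x : L) ∈ (seq n).F :=
      (hmono _ n ((le_max_left _ _).trans (le_max_left _ _))).1 (hN x)
    have hym : (y : L) ∈ (seq n).F :=
      (hmono _ n ((le_max_right _ _).trans (le_max_left _ _))).1 (hN y)
    have hsm : ((x ⊔ y : Set.Icc a b) : L) ∈ (seq n).F :=
      (hmono _ n (le_max_right _ _)).1 (hN (x ⊔ y))
    show (seq (N (x ⊔ y))).f _ = (seq (N x)).f x ⊔ (seq (N y)).f y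
    rw [hcoh (N (x ⊔ y)) n _ (hN _) hsm, hcoh (N x) n x (hN x) hxm,
      hcoh (N y) n y (hN y) hym]
    exact (seq n).hsup _ hxm _ hym
  · -- inf
    intro x y
    apply Subtype.ext
    set n := max (max (N x) (N y)) (N (x ⊓ y)) with hn
    have hxm : (x : L) ∈ (seq n).F :=
      (hmono _ n ((le_max_left _ _).trans (le_max_left _ _))).1 (hN x)
    have hym : (y : L) ∈ (seq n).F :=
      (hmono _ n ((le_max_right _ _).trans (le_max_left _ _))).1 (hN y)
    have hsm : ((x ⊓ y : Set.Icc a b) : L) ∈ (seq n).F :=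
      (hmono _ n (le_max_right _ _)).1 (hN (x ⊓ y))
    show (seq (N (x ⊓ y))).f _ = (seq (N x)).f x ⊓ (seq (N y)).f y
    rw [hcoh (N (x ⊓ y)) n _ (hN _) hsm, hcoh (N x) n x (hN x) hxm,
      hcoh (N y) n y (hN y) hym]
    exact (seq n).hinf _ hxm _ hym
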